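/- Let M = 3/2 − √2 and κ = 1019/1000, and for ξ ∈ [0, 1/4] define G_ξ(w,f) = (1 − f)·t·(1/2 − t) + 4Mξ·w/(1 − f), where t = 1 − w/(1 − f). Then for all ξ ∈ [0, 1/4], all w_1, w_2, w_3 ∈ [0, 1/2] and all f_1, f_2, f_3 ∈ [0, 1/2] satisfying (1 − f_i)/2 ≤ w_i ≤ 1 − f_i for i = 1,2,3, one has (G_ξ(w_1,f_1)+G_ξ(w_2,f_2))/2 ≤ κ·G_ξ((w_1+w_2)/2, (f_1+f_2)/2) and (G_ξ(w_1,f_1)+G_ξ(w_2,f_2)+G_ξ(w_3,f_3))/3 ≤ κ·G_ξ((w_1+w_2+w_3)/3, (f_1+f_2+f_3)/3). -/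
import Mathlib
set_option maxHeartbeats 1000000

lemma engel2 (x₁ x₂ s₁ s₂ : ℝ) (h₁ : 0 < s₁) (h₂ : 0 < s₂) :
    (x₁ + x₂)^2/(s₁+s₂) ≤ x₁^2/s₁ + x₂^2/s₂ := by
  rw [div_add_div _ _ h₁.ne' h₂.ne', div_le_div_iff₀ (by positivity) (by positivity)]
  nlinarith [sq_nonneg (x₁*s₂ - x₂*s₁), mul_pos h₁ h₂]

lemma engel3 (x₁ x₂ x₃ s₁ s₂ s₃ : ℝ) (h₁ : 0 < s₁) (h₂ : 0 < s₂) (h₃ : 0 < s₃) :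
    (x₁ + x₂ + x₃)^2/(s₁+s₂+s₃) ≤ x₁^2/s₁ + x₂^2/s₂ + x₃^2/s₃ := by
  have h12 := engel2 x₁ x₂ s₁ s₂ h₁ h₂
  have h := engel2 (x₁+x₂) x₃ (s₁+s₂) s₃ (by linarith) h₃
  linarith

lemma inv_le_aux (s : ℝ) (h1 : 1/2 ≤ s) (h2 : s ≤ 1) : 1/s ≤ 3 - 2*s := by
  rw [div_le_iff₀ (by linarith)]
  nlinarith

lemma am2 (S : ℝ) (hS : 0 < S) : 2*Real.sqrt 2 ≤ S + 2/S := by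
  have h2 : Real.sqrt 2 * Real.sqrt 2 = 2 := Real.mul_self_sqrt (by norm_num)
  have key : 2*Real.sqrt 2 * S ≤ S^2 + 2 := by nlinarith [sq_nonneg (S - Real.sqrt 2)]
  have hid : S + 2/S = (S^2+2)/S := by field_simp
  rw [hid, le_div_iff₀ hS]; linarith

lemma am3 (S : ℝ) (hS : 0 < S) : 6*Real.sqrt 2 ≤ 2*S + 9/S := by
  have h2 : Real.sqrt 2 * Real.sqrt 2 = 2 := Real.mul_self_sqrt (by norm_num)
  have key : 6*Real.sqrt 2 * S ≤ 2*S^2 + 9 := by nlinarith [sq_nonneg (Real.sqrt 2 * S - 3)]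
  have hid : 2*S + 9/S = (2*S^2+9)/S := by field_simp
  rw [hid, le_div_iff₀ hS]; linarith

lemma sqrt2_facts : 0 ≤ 3/2 - Real.sqrt 2 ∧ (3/2 - Real.sqrt 2)*(3/2 - Real.sqrt 2) ≤ 19/1000 := by
  have h2 : Real.sqrt 2 * Real.sqrt 2 = 2 := Real.mul_self_sqrt (by norm_num)
  have h0 := Real.sqrt_nonneg 2
  constructor
  · nlinarith
  · nlinarith

lemma pairIneq (c s₁ s₂ w₁ w₂ : ℝ)
    (hc : 0 ≤ c) (hcM : c ≤ 3/2 - Real.sqrt 2)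
    (hs₁ : 1/2 ≤ s₁) (hs₁' : s₁ ≤ 1) (hs₂ : 1/2 ≤ s₂) (hs₂' : s₂ ≤ 1)
    (hw₁ : s₁/2 ≤ w₁) (hw₁' : w₁ ≤ s₁) (hw₂ : s₂/2 ≤ w₂) (hw₂' : w₂ ≤ s₂) :
    ((c*w₁ - w₁^2)/s₁ + (3*w₁ - s₁)/2 + ((c*w₂ - w₂^2)/s₂ + (3*w₂ - s₂)/2)) / 2
      ≤ (1019/1000) * ((c*((w₁+w₂)/2) - ((w₁+w₂)/2)^2)/((s₁+s₂)/2)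
          + (3*((w₁+w₂)/2) - (s₁+s₂)/2)/2) := by
  have h₁ : 0 < s₁ := by linarith
  have h₂ : 0 < s₂ := by linarith
  have hS : 0 < s₁ + s₂ := by linarith
  obtain ⟨hM, hM2⟩ := sqrt2_facts
  have heng : (w₁+w₂ - c)^2/(s₁+s₂) ≤ (w₁ - c/2)^2/s₁ + (w₂ - c/2)^2/s₂ := by
    have h := engel2 (w₁ - c/2) (w₂ - c/2) s₁ s₂ h₁ h₂
    have e : (w₁ - c/2 + (w₂ - c/2)) = (w₁+w₂-c) := by ring
    rw [e] at h; exact h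
  have id1 : (c*w₁ - w₁^2)/s₁ = -((w₁ - c/2)^2/s₁) + (c^2/4)*(1/s₁) := by
    field_simp; ring
  have id2 : (c*w₂ - w₂^2)/s₂ = -((w₂ - c/2)^2/s₂) + (c^2/4)*(1/s₂) := by
    field_simp; ring
  have idbar : (c*((w₁+w₂)/2) - ((w₁+w₂)/2)^2)/((s₁+s₂)/2)
      = -(1/2)*((w₁+w₂-c)^2/(s₁+s₂)) + (c^2/2)*(1/(s₁+s₂)) := by
    field_simp; ring
  have hGbar_low : c/2 ≤ (c*((w₁+w₂)/2) - ((w₁+w₂)/2)^2)/((s₁+s₂)/2)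
      + (3*((w₁+w₂)/2) - (s₁+s₂)/2)/2 := by
    rw [← sub_nonneg]
    have hidg : (c*((w₁+w₂)/2) - ((w₁+w₂)/2)^2)/((s₁+s₂)/2)
        + (3*((w₁+w₂)/2) - (s₁+s₂)/2)/2 - c/2
        = (((s₁+s₂)/2 - (w₁+w₂)/2)*((w₁+w₂)/2 - (s₁+s₂)/4)
            + c*((w₁+w₂)/2 - (s₁+s₂)/4)) / ((s₁+s₂)/2) := by
      field_simp; ring
    rw [hidg]
    apply div_nonneg _ (by linarith)
    have a1 : 0 ≤ (s₁+s₂)/2 - (w₁+w₂)/2 := by linarith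
    have a2 : 0 ≤ (w₁+w₂)/2 - (s₁+s₂)/4 := by linarith
    nlinarith [mul_nonneg a1 a2, mul_nonneg hc a2]
  have hinv1 := inv_le_aux s₁ hs₁ hs₁'
  have hinv2 := inv_le_aux s₂ hs₂ hs₂'
  have ham := am2 (s₁+s₂) hS
  have hE : 1/s₁ + 1/s₂ - 4*(1/(s₁+s₂)) ≤ 4*(3/2 - Real.sqrt 2) := by
    have h4 : 4*(1/(s₁+s₂)) = 2*(2/(s₁+s₂)) := by ring
    linarith
  have hdef : (c^2/4)*(1/s₁) + (c^2/4)*(1/s₂) - c^2*(1/(s₁+s₂)) ≤ (19/1000)*c := by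
    nlinarith [mul_nonneg (mul_nonneg hc hc) (sub_nonneg.2 hE),
               mul_nonneg (mul_nonneg hc hM) (sub_nonneg.2 hcM),
               mul_nonneg hc (sub_nonneg.2 hM2)]
  linarith [heng, hGbar_low, hdef, id1, id2, idbar]

lemma tripleIneq (c s₁ s₂ s₃ w₁ w₂ w₃ : ℝ)
    (hc : 0 ≤ c) (hcM : c ≤ 3/2 - Real.sqrt 2)
    (hs₁ : 1/2 ≤ s₁) (hs₁' : s₁ ≤ 1) (hs₂ : 1/2 ≤ s₂) (hs₂' : s₂ ≤ 1)
    (hs₃ : 1/2 ≤ s₃) (hs₃' : s₃ ≤ 1)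
    (hw₁ : s₁/2 ≤ w₁) (hw₁' : w₁ ≤ s₁) (hw₂ : s₂/2 ≤ w₂) (hw₂' : w₂ ≤ s₂)
    (hw₃ : s₃/2 ≤ w₃) (hw₃' : w₃ ≤ s₃) :
    ((c*w₁ - w₁^2)/s₁ + (3*w₁ - s₁)/2 + ((c*w₂ - w₂^2)/s₂ + (3*w₂ - s₂)/2)
        + ((c*w₃ - w₃^2)/s₃ + (3*w₃ - s₃)/2)) / 3
      ≤ (1019/1000) * ((c*((w₁+w₂+w₃)/3) - ((w₁+w₂+w₃)/3)^2)/((s₁+s₂+s₃)/3)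
          + (3*((w₁+w₂+w₃)/3) - (s₁+s₂+s₃)/3)/2) := by
  have h₁ : 0 < s₁ := by linarith
  have h₂ : 0 < s₂ := by linarith
  have h₃ : 0 < s₃ := by linarith
  have hS : 0 < s₁ + s₂ + s₃ := by linarith
  obtain ⟨hM, hM2⟩ := sqrt2_facts
  have heng : (w₁+w₂+w₃ - 3*c/2)^2/(s₁+s₂+s₃)
      ≤ (w₁ - c/2)^2/s₁ + (w₂ - c/2)^2/s₂ + (w₃ - c/2)^2/s₃ := by
    have h := engel3 (w₁ - c/2) (w₂ - c/2) (w₃ - c/2) s₁ s₂ s₃ h₁ h₂ h₃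
    have e : (w₁ - c/2 + (w₂ - c/2) + (w₃ - c/2)) = (w₁+w₂+w₃-3*c/2) := by ring
    rw [e] at h; exact h
  have id1 : (c*w₁ - w₁^2)/s₁ = -((w₁ - c/2)^2/s₁) + (c^2/4)*(1/s₁) := by
    field_simp; ring
  have id2 : (c*w₂ - w₂^2)/s₂ = -((w₂ - c/2)^2/s₂) + (c^2/4)*(1/s₂) := by
    field_simp; ring
  have id3 : (c*w₃ - w₃^2)/s₃ = -((w₃ - c/2)^2/s₃) + (c^2/4)*(1/s₃) := by
    field_simp; ring
  have idbar : (c*((w₁+w₂+w₃)/3) - ((w₁+w₂+w₃)/3)^2)/((s₁+s₂+s₃)/3)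
      = -(1/3)*((w₁+w₂+w₃-3*c/2)^2/(s₁+s₂+s₃)) + (3*c^2/4)*(1/(s₁+s₂+s₃)) := by
    field_simp; ring
  have hGbar_low : c/2 ≤ (c*((w₁+w₂+w₃)/3) - ((w₁+w₂+w₃)/3)^2)/((s₁+s₂+s₃)/3)
      + (3*((w₁+w₂+w₃)/3) - (s₁+s₂+s₃)/3)/2 := by
    rw [← sub_nonneg]
    have hidg : (c*((w₁+w₂+w₃)/3) - ((w₁+w₂+w₃)/3)^2)/((s₁+s₂+s₃)/3)
        + (3*((w₁+w₂+w₃)/3) - (s₁+s₂+s₃)/3)/2 - c/2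
        = (((s₁+s₂+s₃)/3 - (w₁+w₂+w₃)/3)*((w₁+w₂+w₃)/3 - (s₁+s₂+s₃)/6)
            + c*((w₁+w₂+w₃)/3 - (s₁+s₂+s₃)/6)) / ((s₁+s₂+s₃)/3) := by
      field_simp; ring
    rw [hidg]
    apply div_nonneg _ (by linarith)
    have a1 : 0 ≤ (s₁+s₂+s₃)/3 - (w₁+w₂+w₃)/3 := by linarith
    have a2 : 0 ≤ (w₁+w₂+w₃)/3 - (s₁+s₂+s₃)/6 := by linarith
    nlinarith [mul_nonneg a1 a2, mul_nonneg hc a2]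
  have hinv1 := inv_le_aux s₁ hs₁ hs₁'
  have hinv2 := inv_le_aux s₂ hs₂ hs₂'
  have hinv3 := inv_le_aux s₃ hs₃ hs₃'
  have ham := am3 (s₁+s₂+s₃) hS
  have hE : 1/s₁ + 1/s₂ + 1/s₃ - 9*(1/(s₁+s₂+s₃)) ≤ 6*(3/2 - Real.sqrt 2) := by
    have h9 : 9*(1/(s₁+s₂+s₃)) = 9/(s₁+s₂+s₃) := by ring
    linarith
  have hdef : (c^2/4)*(1/s₁) + (c^2/4)*(1/s₂) + (c^2/4)*(1/s₃)
      - (9*c^2/4)*(1/(s₁+s₂+s₃)) ≤ (57/2000)*c := by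
    nlinarith [mul_nonneg (mul_nonneg hc hc) (sub_nonneg.2 hE),
               mul_nonneg (mul_nonneg hc hM) (sub_nonneg.2 hcM),
               mul_nonneg hc (sub_nonneg.2 hM2)]
  linarith [heng, hGbar_low, hdef, id1, id2, id3, idbar]

/-- `G_ξ(w, f) = (1 − f)·t·(1/2 − t) + 4Mξ·w/(1 − f)` with `t = 1 − w/(1 − f)`
and `M = 3/2 − √2`. -/
noncomputable def Gxi (ξ w f : ℝ) : ℝ :=
  (1 - f) * ((1 - w / (1 - f)) * (1 / 2 - (1 - w / (1 - f)))) +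
    4 * (3 / 2 - Real.sqrt 2) * ξ * w / (1 - f)

/-- The averaged Jensen-type inequalities for `G_ξ`, `ξ ∈ [0,1/4]`, with loss factor
`κ = 1019/1000`, on the region `w_i ∈ [0,1/2]`, `f_i ∈ [0,1/2]`,
`(1 − f_i)/2 ≤ w_i ≤ 1 − f_i`. -/
theorem Gxi_jensen_mod (ξ : ℝ) (hξ : ξ ∈ Set.Icc (0 : ℝ) (1 / 4))
    (w₁ w₂ w₃ f₁ f₂ f₃ : ℝ)
    (hw₁ : w₁ ∈ Set.Icc (0 : ℝ) (1 / 2)) (hw₂ : w₂ ∈ Set.Icc (0 : ℝ) (1 / 2))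
    (hw₃ : w₃ ∈ Set.Icc (0 : ℝ) (1 / 2))
    (hf₁ : f₁ ∈ Set.Icc (0 : ℝ) (1 / 2)) (hf₂ : f₂ ∈ Set.Icc (0 : ℝ) (1 / 2))
    (hf₃ : f₃ ∈ Set.Icc (0 : ℝ) (1 / 2))
    (h₁ : (1 - f₁) / 2 ≤ w₁ ∧ w₁ ≤ 1 - f₁)
    (h₂ : (1 - f₂) / 2 ≤ w₂ ∧ w₂ ≤ 1 - f₂)
    (h₃ : (1 - f₃) / 2 ≤ w₃ ∧ w₃ ≤ 1 - f₃) :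
    (Gxi ξ w₁ f₁ + Gxi ξ w₂ f₂) / 2 ≤
        (1019 / 1000) * Gxi ξ ((w₁ + w₂) / 2) ((f₁ + f₂) / 2) ∧
      (Gxi ξ w₁ f₁ + Gxi ξ w₂ f₂ + Gxi ξ w₃ f₃) / 3 ≤
        (1019 / 1000) * Gxi ξ ((w₁ + w₂ + w₃) / 3) ((f₁ + f₂ + f₃) / 3) := by
  obtain ⟨hξ0, hξ1⟩ := hξ
  obtain ⟨hf₁0, hf₁1⟩ := hf₁
  obtain ⟨hf₂0, hf₂1⟩ := hf₂
  obtain ⟨hf₃0, hf₃1⟩ := hf₃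
  obtain ⟨hM, hM2⟩ := sqrt2_facts
  set c : ℝ := 4 * (3 / 2 - Real.sqrt 2) * ξ with hcdef
  have hc : 0 ≤ c := by positivity
  have hcM : c ≤ 3/2 - Real.sqrt 2 := by nlinarith
  have hG : ∀ w f : ℝ, (1:ℝ) - f ≠ 0 →
      Gxi ξ w f = (c*w - w^2)/(1-f) + (3*w - (1-f))/2 := by
    intro w f h
    unfold Gxi
    rw [hcdef]
    field_simp
    ring
  have n1 : (1:ℝ) - f₁ ≠ 0 := by intro h; linarith [h]
  have n2 : (1:ℝ) - f₂ ≠ 0 := by intro h; linarith [h]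
  have n3 : (1:ℝ) - f₃ ≠ 0 := by intro h; linarith [h]
  have n12 : (1:ℝ) - (f₁ + f₂)/2 ≠ 0 := by intro h; linarith [h]
  have n123 : (1:ℝ) - (f₁ + f₂ + f₃)/3 ≠ 0 := by intro h; linarith [h]
  constructor
  · have key := pairIneq c (1-f₁) (1-f₂) w₁ w₂ hc hcM
      (by linarith) (by linarith) (by linarith) (by linarith)
      h₁.1 h₁.2 h₂.1 h₂.2
    rw [hG w₁ f₁ n1, hG w₂ f₂ n2, hG ((w₁+w₂)/2) ((f₁+f₂)/2) n12]
    have e1 : (1:ℝ) - (f₁+f₂)/2 = ((1-f₁)+(1-f₂))/2 := by ring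
    rw [e1]
    convert key using 3 <;> ring
  · have key := tripleIneq c (1-f₁) (1-f₂) (1-f₃) w₁ w₂ w₃ hc hcM
      (by linarith) (by linarith) (by linarith) (by linarith) (by linarith) (by linarith)
      h₁.1 h₁.2 h₂.1 h₂.2 h₃.1 h₃.2
    rw [hG w₁ f₁ n1, hG w₂ f₂ n2, hG w₃ f₃ n3, hG ((w₁+w₂+w₃)/3) ((f₁+f₂+f₃)/3) n123]
    have e1 : (1:ℝ) - (f₁+f₂+f₃)/3 = ((1-f₁)+(1-f₂)+(1-f₃))/3 := by ring
    rw [e1]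
    convert key using 3 <;> ring
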